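/- arXiv:2312.03155 — 3 statements merged into one kernel-verified Lean document; each statement's English description precedes it below -/
import Mathlib

section
/- If λ = -γ ≠ 0, then there exist two algorithms δ and δ' with identical total accuracy (π·FNR(δ,φ) + (1-π)·FPR(δ,φ) = π·FNR(δ',φ) + (1-π)·FPR(δ',φ)) but EU(δ|π,φ) ≠ EU(δ'|π,φ); i.e., expected payoff is not a function of accuracy alone. -/
/-- FNR(δ,φ) = φ + δ0 - φ(δ0+δ1). -/
noncomputable def FNR (δ0 δ1 φ : ℝ) : ℝ := φ + δ0 - φ * (δ0 + δ1)

/-- FPR(δ,φ) = φ + δ1 - φ(δ0+δ1). -/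
noncomputable def FPR (δ0 δ1 φ : ℝ) : ℝ := φ + δ1 - φ * (δ0 + δ1)

/-- If λ = -γ ≠ 0 then there are two algorithms with identical total error
rate but different expected payoff: payoff is not a function of accuracy alone. -/
theorem opposed_error_payoffs_not_measurable_in_accuracy
    (π φ lam gam : ℝ) (hπ : 0 < π ∧ π < 1) (hφ : 1/2 < φ ∧ φ < 1)
    (hopp : lam = -gam) (hne : lam ≠ 0) :
    ∃ δ0 δ1 δ0' δ1' : ℝ,
      (0 ≤ δ0 ∧ δ0 ≤ 1) ∧ (0 ≤ δ1 ∧ δ1 ≤ 1) ∧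
      (0 ≤ δ0' ∧ δ0' ≤ 1) ∧ (0 ≤ δ1' ∧ δ1' ≤ 1) ∧
      π * FNR δ0 δ1 φ + (1 - π) * FPR δ0 δ1 φ
        = π * FNR δ0' δ1' φ + (1 - π) * FPR δ0' δ1' φ ∧
      π * lam * FNR δ0 δ1 φ + (1 - π) * gam * FPR δ0 δ1 φ
        ≠ π * lam * FNR δ0' δ1' φ + (1 - π) * gam * FPR δ0' δ1' φ := by
  obtain ⟨hπ0, hπ1⟩ := hπ
  obtain ⟨hφ0, hφ1⟩ := hφ
  refine ⟨max (π + φ - 1) 0, max (π - φ) 0, max (1 - π - φ) 0, max (φ - π) 0,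
    ⟨le_max_right _ _, ?_⟩, ⟨le_max_right _ _, ?_⟩,
    ⟨le_max_right _ _, ?_⟩, ⟨le_max_right _ _, ?_⟩, ?_, ?_⟩
  · exact max_le (by linarith) (by linarith)
  · exact max_le (by linarith) (by linarith)
  · exact max_le (by linarith) (by linarith)
  · exact max_le (by linarith) (by linarith)
  all_goals {
    have h0 : max (π + φ - 1) 0 - max (1 - π - φ) 0 = π + φ - 1 := by
      rcases le_total (π + φ - 1) 0 with h | h
      · rw [max_eq_right h, max_eq_left (by linarith)]; ring
      · rw [max_eq_left h, max_eq_right (by linarith)]; ring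
    have h1 : max (π - φ) 0 - max (φ - π) 0 = π - φ := by
      rcases le_total (π - φ) 0 with h | h
      · rw [max_eq_right h, max_eq_left (by linarith)]; ring
      · rw [max_eq_left h, max_eq_right (by linarith)]; ring
    simp only [FNR, FPR]
    first
    | linear_combination (π - φ) * h0 + (1 - π - φ) * h1
    | { subst hopp
        intro heq
        have hD : (-gam) * (2 * π * (1 - π) * (2 * φ - 1)) = 0 := by
          linear_combination heq + (gam * (π + φ - 2 * π * φ)) * h0
            + (gam * (π + φ - 1 - 2 * π * φ)) * h1
        have hpos : 2 * π * (1 - π) * (2 * φ - 1) > 0 := by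
          have := mul_pos (mul_pos hπ0 (by linarith : (0:ℝ) < 1 - π))
            (by linarith : (0:ℝ) < 2 * φ - 1)
          nlinarith
        rcases mul_eq_zero.mp hD with h | h
        · exact hne h
        · linarith }
  }
end

section
/- In a binary classification problem with two groups having equal signal accuracies (φ_X = φ_Y = φ), a group-conditioned algorithm δ satisfies error rate balance if and only if δ_0(X) = δ_0(Y) and δ_1(X) = δ_1(Y), provided φ ∈ (1/2, 1]. -/
/-- With equal accuracies φ across the two groups, a group-conditioned
algorithm satisfies error rate balance iff δ0(X)=δ0(Y) and δ1(X)=δ1(Y),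
provided φ ∈ (1/2,1]. -/
theorem erb_iff_equal_algorithm
    (φ δ0X δ1X δ0Y δ1Y : ℝ) (hφ : 1/2 < φ ∧ φ ≤ 1)
    (h0X : 0 ≤ δ0X ∧ δ0X ≤ 1) (h1X : 0 ≤ δ1X ∧ δ1X ≤ 1)
    (h0Y : 0 ≤ δ0Y ∧ δ0Y ≤ 1) (h1Y : 0 ≤ δ1Y ∧ δ1Y ≤ 1) :
    (φ * δ1X + (1 - φ) * (1 - δ0X) = φ * δ1Y + (1 - φ) * (1 - δ0Y) ∧
     φ * δ0X + (1 - φ) * (1 - δ1X) = φ * δ0Y + (1 - φ) * (1 - δ1Y))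
    ↔ (δ0X = δ0Y ∧ δ1X = δ1Y) := by
  obtain ⟨hφ1, hφ2⟩ := hφ
  constructor
  · rintro ⟨h1, h2⟩
    have ha : φ * (δ1X - δ1Y) = (1 - φ) * (δ0X - δ0Y) := by linarith
    have hb : φ * (δ0X - δ0Y) = (1 - φ) * (δ1X - δ1Y) := by linarith
    have key : (2 * φ - 1) * (δ1X - δ1Y + (δ0X - δ0Y)) = 0 := by nlinarith
    have key2 : (2 * φ - 1) * (δ1X - δ1Y - (δ0X - δ0Y)) = 0 := by nlinarith
    have h2φ : 2 * φ - 1 ≠ 0 := by linarith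
    have e1 := mul_eq_zero.mp key
    have e2 := mul_eq_zero.mp key2
    rcases e1 with h | h; · exact absurd h h2φ
    rcases e2 with h' | h'; · exact absurd h' h2φ
    constructor <;> linarith
  · rintro ⟨rfl, rfl⟩; exact ⟨rfl, rfl⟩
end

section
/- In a k-symmetric classification problem, error rate balance implies accuracy balance, and the converse holds if and only if k = 2: for k ≥ 3 there exists an algorithm (with symmetric signals) satisfying accuracy balance but violating error rate balance. -/
open Finset

/-!
With two labels a row-stochastic kernel is determined by its diagonal, since the one error
probability in row `β` is `1 - P g β β`; so equal accuracies force equal error rates.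
With `k ≥ 3` labels the errors of a row can be spread in different ways: the deterministic
rules `β ↦ β + 1` and `β ↦ β + 2` are both never correct, yet they err differently.
-/

def ErrorRateBalance {G B D R : Type*} (P : G → B → D → R) : Prop :=
  ∀ g g' β d, P g β d = P g' β d

def AccuracyBalance {G B R : Type*} (P : G → B → B → R) : Prop :=
  ∀ g g' β, P g β β = P g' β β

theorem ErrorRateBalance.accuracyBalance {G B R : Type*} {P : G → B → B → R}
    (h : ErrorRateBalance P) : AccuracyBalance P :=
  fun g g' β => h g g' β β

theorem Fin.sum_univ_two_of_ne {M : Type*} [AddCommMonoid M] (f : Fin 2 → M) {i j : Fin 2}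
    (h : i ≠ j) : ∑ x, f x = f i + f j := by
  fin_cases i <;> fin_cases j <;> simp_all [Fin.sum_univ_two, add_comm]

theorem AccuracyBalance.errorRateBalance_of_fin_two {G R : Type*} [AddCommGroup R] {r : R}
    {P : G → Fin 2 → Fin 2 → R} (hsum : ∀ g β, ∑ d, P g β d = r) (h : AccuracyBalance P) :
    ErrorRateBalance P := by
  intro g g' β d
  obtain rfl | hd := eq_or_ne β d
  · exact h g g' β
  · have hg : P g β β + P g β d = r := (Fin.sum_univ_two_of_ne _ hd).symm.trans (hsum g β)
    have hg' : P g' β β + P g' β d = r := (Fin.sum_univ_two_of_ne _ hd).symm.trans (hsum g' β)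
    rw [h g g' β] at hg
    exact add_left_cancel (hg.trans hg'.symm)

section DeterministicRules

variable {B D : Type*} [DecidableEq D]

def ruleKernel (f : B → D) (β : B) : D → ℝ :=
  Pi.single (f β) 1

theorem ruleKernel_nonneg (f : B → D) (β : B) (d : D) : 0 ≤ ruleKernel f β d :=
  (Pi.single_nonneg.mpr zero_le_one : (0 : D → ℝ) ≤ ruleKernel f β) d

theorem sum_ruleKernel [Fintype D] (f : B → D) (β : B) : ∑ d, ruleKernel f β d = 1 := by
  simp [ruleKernel, Finset.sum_pi_single']

theorem ruleKernel_self_eq_zero {f : B → B} [DecidableEq B] (hf : ∀ β, f β ≠ β) (β : B) :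
    ruleKernel f β β = 0 :=
  Pi.single_eq_of_ne (hf β).symm 1

theorem ruleKernel_injective : Function.Injective (ruleKernel : (B → D) → B → D → ℝ) := by
  intro f₁ f₂ h
  funext β
  by_contra hne
  have := congrFun (congrFun h β) (f₁ β)
  simp [ruleKernel, Pi.single_eq_of_ne hne] at this

end DeterministicRules

theorem exists_accuracyBalance_not_errorRateBalance {B : Type*} [Fintype B] [DecidableEq B]
    {f₁ f₂ : B → B} (h₁ : ∀ β, f₁ β ≠ β) (h₂ : ∀ β, f₂ β ≠ β) (hne : f₁ ≠ f₂) :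
    ∃ P : Bool → B → B → ℝ,
      (∀ g β d, 0 ≤ P g β d) ∧ (∀ g β, ∑ d, P g β d = 1) ∧
      AccuracyBalance P ∧ ¬ ErrorRateBalance P := by
  have hzero : ∀ g β, ruleKernel (cond g f₁ f₂) β β = 0 := by
    intro g
    cases g
    exacts [ruleKernel_self_eq_zero h₂, ruleKernel_self_eq_zero h₁]
  refine ⟨fun g => ruleKernel (cond g f₁ f₂), fun g => ruleKernel_nonneg _,
    fun g => sum_ruleKernel _, fun g g' β => (hzero g β).trans (hzero g' β).symm, ?_⟩
  intro h
  exact hne (ruleKernel_injective (funext fun β => funext (h true false β)))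

theorem Fin.exists_distinct_ne_zero_of_three_le {k : ℕ} [NeZero k] (hk : 3 ≤ k) :
    ∃ a b : Fin k, a ≠ 0 ∧ b ≠ 0 ∧ a ≠ b :=
  ⟨⟨1, by omega⟩, ⟨2, by omega⟩, by simp [Fin.ext_iff], by simp [Fin.ext_iff],
    by simp [Fin.ext_iff]⟩

/-- In k-symmetric classification problems, error rate balance implies
accuracy balance; the converse holds iff k = 2: for row-stochastic conditional
decision kernels accuracy balance implies error rate balance when k = 2, while
for every k ≥ 3 there is a counterexample. -/
theorem erb_vs_accuracy_balance :
    -- ERB implies AB in any k-SCP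
    (∀ (k : ℕ) (G : Type) (P : G → Fin k → Fin k → ℝ),
      (∀ g g' β d, P g β d = P g' β d) → (∀ g g' β, P g β β = P g' β β)) ∧
    -- AB implies ERB when k = 2
    (∀ (G : Type) (P : G → Fin 2 → Fin 2 → ℝ),
      (∀ g β, ∑ d : Fin 2, P g β d = 1) →
      (∀ g g' β, P g β β = P g' β β) →
      (∀ g g' β d, P g β d = P g' β d)) ∧
    -- for k ≥ 3 accuracy balance does not imply error rate balance
    (∀ k : ℕ, 3 ≤ k →
      ∃ P : Bool → Fin k → Fin k → ℝ,
        (∀ g β d, 0 ≤ P g β d) ∧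
        (∀ g β, ∑ d : Fin k, P g β d = 1) ∧
        (∀ g g' β, P g β β = P g' β β) ∧
        ¬(∀ g g' β d, P g β d = P g' β d)) := by
  refine ⟨fun _ _ _ => ErrorRateBalance.accuracyBalance,
    fun _ _ => AccuracyBalance.errorRateBalance_of_fin_two, fun k hk => ?_⟩
  have : NeZero k := ⟨by omega⟩
  obtain ⟨a, b, ha, hb, hab⟩ := Fin.exists_distinct_ne_zero_of_three_le hk
  refine exists_accuracyBalance_not_errorRateBalance (f₁ := (· + a)) (f₂ := (· + b))
    (fun _ => add_ne_left.mpr ha) (fun _ => add_ne_left.mpr hb) fun h => hab ?_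
  simpa using congrFun h 0
end
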